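/- arXiv:2401.13419 — 5 statements merged into one kernel-verified Lean document; each statement's English description precedes it below -/
import Mathlib

section
/- Given a Clifford system, the three complex 8×8 matrices S_k = i γ_k ρ_k (k = 1, 2, 3) are Hermitian, satisfy S_k² = I, and pairwise commute; moreover, for every sign pattern (ι₁, ι₂, ι₃) ∈ {+1, −1}³ the joint eigenspace {v ∈ ℂ⁸ : S_k v = ι_k v for k = 1, 2, 3} has complex dimension exactly 1, so ℂ⁸ is the direct sum of the eight joint eigenlines. -/
/-!
Each `S_k` is `i` times a product of two anticommuting square roots of `-1`, so it is an
involution, and the `S_k` pairwise commute because every factor of one anticommutes with both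
factors of the other. Commuting involutions are simultaneously diagonalizable, so `ℂ⁸` is the
internal direct sum of the eight joint eigenspaces for sign patterns. Multiplication by `γ_k`
is invertible, anticommutes with `S_k` and commutes with the other two, so it carries each joint
eigenspace isomorphically onto the one with the `k`-th sign flipped: all eight have the same
dimension, which must therefore be `8 / 8 = 1`.
-/

open Matrix

/-- A *Clifford system*: real antisymmetric 8×8 matrices `γ₁,…,γ₄, ρ₁, ρ₂, ρ₃` and a
symmetric `Γ` obeying the algebraic relations (3.5) of the paper. -/
structure CliffordSystem where
  γ : Fin 4 → Matrix (Fin 8) (Fin 8) ℝ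
  ρ : Fin 3 → Matrix (Fin 8) (Fin 8) ℝ
  Γ : Matrix (Fin 8) (Fin 8) ℝ
  γ_antisymm : ∀ α, (γ α)ᵀ = -(γ α)
  ρ_antisymm : ∀ j, (ρ j)ᵀ = -(ρ j)
  Γ_symm : Γᵀ = Γ
  γγ : ∀ α β, γ α * γ β + γ β * γ α =
    if α = β then (-2 : ℝ) • (1 : Matrix (Fin 8) (Fin 8) ℝ) else 0
  ρρ : ∀ j k, ρ j * ρ k + ρ k * ρ j =
    if j = k then (-2 : ℝ) • (1 : Matrix (Fin 8) (Fin 8) ℝ) else 0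
  ργ : ∀ j α, ρ j * γ α + γ α * ρ j = 0
  Γγ : ∀ α, Γ * γ α + γ α * Γ = 0
  Γρ : ∀ j, Γ * ρ j = ρ j * Γ
  Γsq : Γ * Γ = 1

/-- The `γ` matrices acting ℂ-linearly on `ℂ⁸`. -/
noncomputable def CliffordSystem.γC (C : CliffordSystem) (α : Fin 4) :
    Matrix (Fin 8) (Fin 8) ℂ :=
  (C.γ α).map (fun r => (r : ℂ))

/-- The `ρ` matrices acting ℂ-linearly on `ℂ⁸`. -/
noncomputable def CliffordSystem.ρC (C : CliffordSystem) (j : Fin 3) :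
    Matrix (Fin 8) (Fin 8) ℂ :=
  (C.ρ j).map (fun r => (r : ℂ))

/-- The matrix `Γ` acting ℂ-linearly on `ℂ⁸`. -/
noncomputable def CliffordSystem.ΓC (C : CliffordSystem) : Matrix (Fin 8) (Fin 8) ℂ :=
  C.Γ.map (fun r => (r : ℂ))

/-- The Hermitian matrices `S_k = i γ_k ρ_k`, `k = 1,2,3`. -/
noncomputable def CliffordSystem.S (C : CliffordSystem) (k : Fin 3) :
    Matrix (Fin 8) (Fin 8) ℂ :=
  Complex.I • (C.γC k.castSucc * C.ρC k)

/-- The joint eigenspace of `S₁, S₂, S₃` for a sign pattern `ι`. -/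
noncomputable def CliffordSystem.jointEigenspace (C : CliffordSystem) (ι : Fin 3 → ℂ) :
    Submodule ℂ (Fin 8 → ℂ) :=
  ⨅ k : Fin 3, Module.End.eigenspace ((C.S k).mulVecLin) (ι k)

open Module Function Set

theorem eq_neg_of_add_self_eq_neg_two_smul {V : Type*} [AddCommGroup V] [Module ℝ V] {x y : V}
    (h : x + x = (-2 : ℝ) • y) : x = -y := by
  linear_combination (norm := module) (2⁻¹ : ℝ) • h

section Anticommute

variable {R : Type*} [Ring R] {a b c : R}

theorem commute_mul_of_anticomm (hb : a * b = -(b * a)) (hc : a * c = -(c * a)) :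
    Commute a (b * c) := by
  calc a * (b * c) = -(b * (a * c)) := by rw [← mul_assoc, hb, neg_mul, mul_assoc]
    _ = b * c * a := by rw [hc, mul_neg, neg_neg, mul_assoc]

theorem mul_mul_self_eq_neg_one_of_anticomm (hab : a * b = -(b * a)) (ha : a * a = -1)
    (hb : b * b = -1) : a * b * (a * b) = -1 := by
  have hba : b * a = -(a * b) := by rw [hab, neg_neg]
  calc a * b * (a * b) = a * (b * a) * b := by simp only [mul_assoc]
    _ = -(a * a * (b * b)) := by rw [hba]; simp only [mul_neg, neg_mul, mul_assoc]
    _ = -1 := by rw [ha, hb, neg_one_mul, neg_neg]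

theorem mul_mul_eq_neg_of_anticomm (hab : a * b = -(b * a)) : a * (a * b) = -(a * b * a) := by
  rw [mul_assoc, hab, mul_neg]

end Anticommute

theorem Function.apply_eq_apply_of_forall_update {ι α β : Type*} [Finite ι] [DecidableEq ι]
    {F : (ι → α) → β} (hF : ∀ x i a, F (update x i a) = F x) (x y : ι → α) : F x = F y := by
  cases nonempty_fintype ι
  suffices ∀ s : Finset ι, F (s.piecewise y x) = F x by simpa using (this Finset.univ).symm
  intro s
  induction s using Finset.induction_on with
  | empty => simp
  | insert i s _ ih => rw [Finset.piecewise_insert, hF, ih]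

theorem DirectSum.IsInternal.sum_finrank_eq {K M ι : Type*} [DivisionRing K] [AddCommGroup M]
    [Module K M] [FiniteDimensional K M] [Fintype ι] [DecidableEq ι] {A : ι → Submodule K M}
    (h : DirectSum.IsInternal A) : ∑ i, finrank K (A i) = finrank K M := by
  rw [← Module.finrank_directSum, (LinearEquiv.ofBijective (DirectSum.coeLinearMap A) h).finrank_eq]

namespace Module.End

variable {K M : Type*} [Field K] [AddCommGroup M] [Module K M] {f g : End K M}
  {ι : Type*} {F : ι → End K M}

theorem mapsTo_eigenspace_neg_of_anticomm (h : g * f = -(f * g)) (μ : K) :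
    MapsTo g (f.eigenspace μ) (f.eigenspace (-μ)) := by
  intro v hv
  rw [SetLike.mem_coe, mem_eigenspace_iff] at hv ⊢
  have := congr($h v)
  simp only [mul_apply, LinearMap.neg_apply, hv, map_smul] at this
  rw [neg_smul, this, neg_neg]

theorem eigenspace_eq_bot_of_mul_self_eq_one (hf : f * f = 1) {μ : K} (h₁ : μ ≠ 1)
    (h₂ : μ ≠ -1) : f.eigenspace μ = ⊥ := by
  rw [Submodule.eq_bot_iff]
  intro v hv
  rw [mem_eigenspace_iff] at hv
  have hsq : (μ * μ - 1) • v = 0 := by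
    have := congr($hf v)
    rw [mul_apply, hv, map_smul, hv, smul_smul, one_apply] at this
    rw [sub_smul, one_smul, this, sub_self]
  refine (smul_eq_zero.mp hsq).resolve_left ?_
  exact fun h ↦ (mul_self_eq_one_iff.mp (sub_eq_zero.mp h)).elim h₁ h₂

theorem finrank_iInf_eigenspace_le_finrank_update_neg [DecidableEq ι] [FiniteDimensional K M]
    (hg : Function.Injective g) {k : ι} (hk : g * F k = -(F k * g))
    (hj : ∀ j ≠ k, Commute (F j) g) (χ : ι → K) :
    finrank K ↥(⨅ i, (F i).eigenspace (χ i)) ≤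
      finrank K ↥(⨅ i, (F i).eigenspace (update χ k (-χ k) i)) := by
  have hmaps : (⨅ i, (F i).eigenspace (χ i)).map g ≤
      ⨅ i, (F i).eigenspace (update χ k (-χ k) i) := by
    rw [Submodule.map_le_iff_le_comap]
    intro v hv
    simp only [Submodule.mem_comap, Submodule.mem_iInf] at hv ⊢
    intro i
    rcases eq_or_ne i k with rfl | hi
    · rw [update_self]
      exact mapsTo_eigenspace_neg_of_anticomm hk _ (hv i)
    · rw [update_of_ne hi]
      exact mapsTo_genEigenspace_of_comm (hj i hi) _ 1 (hv i)
  calc finrank K ↥(⨅ i, (F i).eigenspace (χ i))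
      = finrank K ↥((⨅ i, (F i).eigenspace (χ i)).map g) :=
        (Submodule.equivMapOfInjective g hg _).finrank_eq
    _ ≤ _ := Submodule.finrank_mono hmaps

theorem finrank_iInf_eigenspace_update_neg [DecidableEq ι] [FiniteDimensional K M]
    (hg : Function.Injective g) {k : ι} (hk : g * F k = -(F k * g))
    (hj : ∀ j ≠ k, Commute (F j) g) (χ : ι → K) :
    finrank K ↥(⨅ i, (F i).eigenspace (update χ k (-χ k) i)) =
      finrank K ↥(⨅ i, (F i).eigenspace (χ i)) := by
  refine le_antisymm ?_ (finrank_iInf_eigenspace_le_finrank_update_neg hg hk hj χ)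
  have h := finrank_iInf_eigenspace_le_finrank_update_neg hg hk hj (update χ k (-χ k))
  rwa [update_self, neg_neg, update_idem, update_eq_self] at h

variable [NeZero (2 : K)]

theorem eigenspace_one_sup_eigenspace_neg_one (hf : f * f = 1) :
    f.eigenspace 1 ⊔ f.eigenspace (-1) = ⊤ := by
  refine eq_top_iff.mpr fun v _ ↦ ?_
  have hv : v = (2⁻¹ : K) • (v + f v) + (2⁻¹ : K) • (v - f v) := by
    rw [← smul_add, add_add_sub_cancel, ← two_smul K v, smul_smul, inv_mul_cancel₀ two_ne_zero,
      one_smul]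
  rw [hv]
  refine Submodule.add_mem_sup (Submodule.smul_mem _ _ ?_) (Submodule.smul_mem _ _ ?_) <;>
  · have := congr($hf v)
    rw [mul_apply, one_apply] at this
    rw [mem_eigenspace_iff]
    simp only [map_add, map_sub, this]
    module

theorem isSemisimple_of_mul_self_eq_one (hf : f * f = 1) : f.IsSemisimple := by
  refine isSemisimple_of_squarefree_aeval_eq_zero
    (Polynomial.separable_X_pow_sub_C (n := 2) (1 : K) two_ne_zero one_ne_zero).squarefree ?_
  simp [sq, hf]

theorem maxGenEigenspace_eq_eigenspace_of_mul_self_eq_one (hf : f * f = 1) (μ : K) :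
    f.maxGenEigenspace μ = f.eigenspace μ :=
  (isSemisimple_of_mul_self_eq_one hf).isFinitelySemisimple.maxGenEigenspace_eq_eigenspace μ

theorem iSupIndep_iInf_eigenspace_of_mul_self_eq_one (hsq : ∀ i, F i * F i = 1)
    (hcomm : ∀ i j, Commute (F i) (F j)) :
    iSupIndep fun χ : ι → K ↦ ⨅ i, (F i).eigenspace (χ i) := by
  simpa only [maxGenEigenspace_eq_eigenspace_of_mul_self_eq_one (hsq _)] using
    independent_iInf_maxGenEigenspace_of_forall_mapsTo F
      fun i j μ ↦ mapsTo_maxGenEigenspace_of_comm (hcomm j i) μ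

theorem iSup_iInf_eigenspace_eq_top_of_mul_self_eq_one [FiniteDimensional K M]
    (hsq : ∀ i, F i * F i = 1) (hcomm : ∀ i j, Commute (F i) (F j)) :
    ⨆ χ : ι → K, ⨅ i, (F i).eigenspace (χ i) = ⊤ := by
  have htop (i : ι) : ⨆ μ, (F i).eigenspace μ = ⊤ :=
    eq_top_iff.mpr <| (eigenspace_one_sup_eigenspace_neg_one (hsq i)).ge.trans <|
      sup_le (le_iSup _ _) (le_iSup _ _)
  simp only [← maxGenEigenspace_eq_eigenspace_of_mul_self_eq_one (hsq _)] at htop ⊢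
  exact iSup_iInf_maxGenEigenspace_eq_top_of_forall_mapsTo F
    (fun i j μ ↦ mapsTo_maxGenEigenspace_of_comm (hcomm j i) μ) htop

theorem isInternal_iInf_eigenspace_sign [FiniteDimensional K M] [DecidableEq (ι → Bool)]
    (hsq : ∀ i, F i * F i = 1) (hcomm : ∀ i j, Commute (F i) (F j)) :
    DirectSum.IsInternal fun b : ι → Bool ↦ ⨅ i, (F i).eigenspace (if b i then 1 else -1) := by
  classical
  set sign : (ι → Bool) → ι → K := fun b i ↦ if b i then 1 else -1
  have hne : (-1 : K) ≠ 1 := fun h ↦ two_ne_zero (α := K) (by linear_combination -h)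
  have sign_injective : Function.Injective sign := by
    intro b b' h
    funext i
    have := congr_fun h i
    simp only [sign] at this
    revert this
    cases b i <;> cases b' i <;> simp [hne, hne.symm]
  refine DirectSum.isInternal_submodule_of_iSupIndep_of_iSup_eq_top
    ((iSupIndep_iInf_eigenspace_of_mul_self_eq_one hsq hcomm).comp sign_injective) ?_
  rw [eq_top_iff, ← iSup_iInf_eigenspace_eq_top_of_mul_self_eq_one hsq hcomm]
  refine iSup_le fun χ ↦ ?_
  by_cases hχ : ∀ i, χ i = 1 ∨ χ i = -1
  · have hχ_sign : χ = sign fun i ↦ decide (χ i = 1) := funext fun i ↦ by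
      rcases hχ i with h | h <;> simp [sign, h, hne]
    rw [hχ_sign]
    exact le_iSup (fun b ↦ ⨅ i, (F i).eigenspace (sign b i)) _
  · push Not at hχ
    obtain ⟨i, h₁, h₂⟩ := hχ
    calc ⨅ i, (F i).eigenspace (χ i) ≤ (F i).eigenspace (χ i) := iInf_le _ i
      _ = ⊥ := eigenspace_eq_bot_of_mul_self_eq_one (hsq i) h₁ h₂
      _ ≤ _ := bot_le

theorem card_mul_finrank_iInf_eigenspace_sign [Fintype ι] [DecidableEq ι] [FiniteDimensional K M]
    (hsq : ∀ i, F i * F i = 1) (hcomm : ∀ i j, Commute (F i) (F j))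
    (hflip : ∀ k, ∃ g : End K M, Function.Injective g ∧ g * F k = -(F k * g) ∧
      ∀ j ≠ k, Commute (F j) g)
    (b : ι → Bool) :
    Fintype.card (ι → Bool) * finrank K ↥(⨅ i, (F i).eigenspace (if b i then 1 else -1)) =
      finrank K M := by
  have hd_update (b : ι → Bool) (k : ι) (x : Bool) :
      finrank K ↥(⨅ i, (F i).eigenspace (if update b k x i then 1 else -1)) =
        finrank K ↥(⨅ i, (F i).eigenspace (if b i then 1 else -1)) := by
    obtain ⟨g, hg, hk, hj⟩ := hflip k
    rcases Bool.eq_or_eq_not x (b k) with rfl | rfl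
    · rw [update_eq_self]
    · have hsign : update (fun i ↦ if b i then (1 : K) else -1) k (-if b k then 1 else -1) =
          fun i ↦ if update b k (!b k) i then 1 else -1 := by
        funext i
        rcases eq_or_ne i k with rfl | hi
        · cases b i <;> simp
        · simp [update_of_ne hi]
      have h := finrank_iInf_eigenspace_update_neg hg hk hj fun i ↦ if b i then (1 : K) else -1
      rwa [hsign] at h
  rw [← (isInternal_iInf_eigenspace_sign hsq hcomm).sum_finrank_eq,
    Finset.sum_congr rfl fun b' _ ↦ apply_eq_apply_of_forall_update
      (F := fun b : ι → Bool ↦ finrank K ↥(⨅ i, (F i).eigenspace (if b i then 1 else -1)))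
      hd_update b' b,
    Finset.sum_const, Finset.card_univ, smul_eq_mul]

end Module.End

theorem Matrix.conjTranspose_map_ofReal_of_transpose_eq_neg {n : Type*} {A : Matrix n n ℝ}
    (h : Aᵀ = -A) : (A.map fun r ↦ (r : ℂ))ᴴ = -A.map fun r ↦ (r : ℂ) := by
  rw [← conjTranspose_map _ fun r ↦ (Complex.conj_ofReal r).symm,
    conjTranspose_eq_transpose_of_trivial, h, Matrix.map_neg _ Complex.ofReal_neg]

namespace CliffordSystem

variable (C : CliffordSystem)

theorem γ_mul_self (α : Fin 4) : C.γ α * C.γ α = -1 :=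
  eq_neg_of_add_self_eq_neg_two_smul (by simpa using C.γγ α α)

theorem ρ_mul_self (j : Fin 3) : C.ρ j * C.ρ j = -1 :=
  eq_neg_of_add_self_eq_neg_two_smul (by simpa using C.ρρ j j)

theorem γ_anticomm {α β : Fin 4} (h : α ≠ β) : C.γ α * C.γ β = -(C.γ β * C.γ α) :=
  eq_neg_of_add_eq_zero_left (by simpa [h] using C.γγ α β)

theorem ρ_anticomm {j k : Fin 3} (h : j ≠ k) : C.ρ j * C.ρ k = -(C.ρ k * C.ρ j) :=
  eq_neg_of_add_eq_zero_left (by simpa [h] using C.ρρ j k)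

theorem ρ_γ_anticomm (j : Fin 3) (α : Fin 4) : C.ρ j * C.γ α = -(C.γ α * C.ρ j) :=
  eq_neg_of_add_eq_zero_left (C.ργ j α)

theorem γC_mul_self (α : Fin 4) : C.γC α * C.γC α = -1 := by
  have h := congr(Complex.ofRealHom.mapMatrix $(C.γ_mul_self α))
  rwa [map_mul, map_neg, map_one] at h

theorem ρC_mul_self (j : Fin 3) : C.ρC j * C.ρC j = -1 := by
  have h := congr(Complex.ofRealHom.mapMatrix $(C.ρ_mul_self j))
  rwa [map_mul, map_neg, map_one] at h

theorem γC_anticomm {α β : Fin 4} (h : α ≠ β) : C.γC α * C.γC β = -(C.γC β * C.γC α) := by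
  have h := congr(Complex.ofRealHom.mapMatrix $(C.γ_anticomm h))
  rwa [map_mul, map_neg, map_mul] at h

theorem ρC_anticomm {j k : Fin 3} (h : j ≠ k) : C.ρC j * C.ρC k = -(C.ρC k * C.ρC j) := by
  have h := congr(Complex.ofRealHom.mapMatrix $(C.ρ_anticomm h))
  rwa [map_mul, map_neg, map_mul] at h

theorem ρC_γC_anticomm (j : Fin 3) (α : Fin 4) : C.ρC j * C.γC α = -(C.γC α * C.ρC j) := by
  have h := congr(Complex.ofRealHom.mapMatrix $(C.ρ_γ_anticomm j α))
  rwa [map_mul, map_neg, map_mul] at h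

theorem γC_ρC_anticomm (j : Fin 3) (α : Fin 4) : C.γC α * C.ρC j = -(C.ρC j * C.γC α) := by
  rw [C.ρC_γC_anticomm, neg_neg]

theorem S_conjTranspose (k : Fin 3) : (C.S k)ᴴ = C.S k := by
  rw [S, conjTranspose_smul, conjTranspose_mul, γC,
    conjTranspose_map_ofReal_of_transpose_eq_neg (C.γ_antisymm _), ρC,
    conjTranspose_map_ofReal_of_transpose_eq_neg (C.ρ_antisymm _), neg_mul_neg, ← ρC, ← γC,
    C.ρC_γC_anticomm, smul_neg, ← neg_smul, Complex.star_def, Complex.conj_I, neg_neg]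

theorem S_mul_self (k : Fin 3) : C.S k * C.S k = 1 := by
  rw [S, smul_mul_smul_comm, Complex.I_mul_I,
    mul_mul_self_eq_neg_one_of_anticomm (C.γC_ρC_anticomm k _) (C.γC_mul_self _) (C.ρC_mul_self k),
    neg_one_smul, neg_neg]

theorem γC_commute_S {j k : Fin 3} (h : j ≠ k) : Commute (C.γC j.castSucc) (C.S k) :=
  (commute_mul_of_anticomm (C.γC_anticomm ((Fin.castSucc_injective 3).ne h))
    (C.γC_ρC_anticomm k _)).smul_right _

theorem ρC_commute_S {j k : Fin 3} (h : j ≠ k) : Commute (C.ρC j) (C.S k) :=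
  (commute_mul_of_anticomm (C.ρC_γC_anticomm j _) (C.ρC_anticomm h)).smul_right _

theorem S_commute (j k : Fin 3) : Commute (C.S j) (C.S k) := by
  rcases eq_or_ne j k with rfl | h
  · exact Commute.refl _
  · exact ((C.γC_commute_S h).mul_left (C.ρC_commute_S h)).smul_left _

theorem γC_mul_S_self (k : Fin 3) : C.γC k.castSucc * C.S k = -(C.S k * C.γC k.castSucc) := by
  rw [S, mul_smul_comm, smul_mul_assoc, mul_mul_eq_neg_of_anticomm (C.γC_ρC_anticomm k _), smul_neg]

theorem mulVecLin_γC_injective (α : Fin 4) : Function.Injective (C.γC α).mulVecLin := by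
  intro v w h
  simpa [mulVec_mulVec, C.γC_mul_self, neg_mulVec] using congr(C.γC α *ᵥ $h)

theorem mulVecLin_S_mul_self (k : Fin 3) : (C.S k).mulVecLin * (C.S k).mulVecLin = 1 := by
  have h := congr(toLinAlgEquiv' $(C.S_mul_self k))
  rwa [map_mul, map_one] at h

theorem mulVecLin_S_commute (j k : Fin 3) :
    Commute (C.S j).mulVecLin (C.S k).mulVecLin :=
  (C.S_commute j k).map toLinAlgEquiv'

theorem mulVecLin_γC_mul_S_self (k : Fin 3) :
    (C.γC k.castSucc).mulVecLin * (C.S k).mulVecLin =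
      -((C.S k).mulVecLin * (C.γC k.castSucc).mulVecLin) := by
  have h := congr(toLinAlgEquiv' $(C.γC_mul_S_self k))
  rwa [map_mul, map_neg, map_mul] at h

theorem isInternal_jointEigenspace_sign :
    DirectSum.IsInternal fun b : Fin 3 → Bool ↦ C.jointEigenspace fun k ↦ if b k then 1 else -1 :=
  Module.End.isInternal_iInf_eigenspace_sign C.mulVecLin_S_mul_self C.mulVecLin_S_commute

theorem finrank_jointEigenspace_sign (b : Fin 3 → Bool) :
    finrank ℂ (C.jointEigenspace fun k ↦ if b k then 1 else -1) = 1 := by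
  have h := Module.End.card_mul_finrank_iInf_eigenspace_sign C.mulVecLin_S_mul_self
    C.mulVecLin_S_commute
    (fun k ↦ ⟨_, C.mulVecLin_γC_injective _, C.mulVecLin_γC_mul_S_self k,
      fun j hj ↦ (C.γC_commute_S hj.symm).symm.map toLinAlgEquiv'⟩) b
  rw [Fintype.card_fun, Fintype.card_bool, Fintype.card_fin, finrank_fin_fun] at h
  exact Nat.eq_of_mul_eq_mul_left (by norm_num) (h.trans (by norm_num))

end CliffordSystem

/-- The matrices `S_k = i γ_k ρ_k` are Hermitian, square to the identity,
pairwise commute, each joint eigenspace for a sign pattern in `{±1}³` is a complex line,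
and `ℂ⁸` is the internal direct sum of the eight joint eigenlines. -/
theorem clifford_joint_eigenlines (C : CliffordSystem) :
    (∀ k, (C.S k)ᴴ = C.S k) ∧
    (∀ k, C.S k * C.S k = 1) ∧
    (∀ j k, C.S j * C.S k = C.S k * C.S j) ∧
    (∀ ι : Fin 3 → ℂ, (∀ k, ι k = 1 ∨ ι k = -1) →
      Module.finrank ℂ (C.jointEigenspace ι) = 1) ∧
    DirectSum.IsInternal (fun b : Fin 3 → Bool =>
      C.jointEigenspace (fun k => if b k then 1 else -1)) := by
  refine ⟨C.S_conjTranspose, C.S_mul_self, C.S_commute, fun ι hι ↦ ?_,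
    C.isInternal_jointEigenspace_sign⟩
  have hι_sign : ι = fun k ↦ if decide (ι k = 1) then 1 else -1 := funext fun k ↦ by
    rcases hι k with h | h <;> simp [h]
  rw [hι_sign]
  exact C.finrank_jointEigenspace_sign _
end

section
/- Given a Clifford system, real numbers λ₁, λ₂, λ₃ > 0, a sign ε ∈ {1, −1} and R > 0, let D send a smooth map ψ : ℝ³ → ℂ⁸ to Dψ = Σ_{k=1}^{3} γ_k ∂ψ/∂x_k + √2 i ε R Σ_{k=1}^{3} λ_k x_k ρ_k ψ. Then for every smooth ψ : ℝ³ → ℂ⁸ one has the identity D(Dψ) = −Σ_{k=1}^{3} ∂²ψ/∂x_k² + √2 R ε Σ_{k=1}^{3} λ_k (i γ_k ρ_k) ψ + 2 R² (Σ_{k=1}^{3} λ_k² x_k²) ψ. -/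
open Matrix

/-- The `k`-th partial derivative of a map `ℝ³ → ℂ⁸`. -/
noncomputable def pderiv3 (k : Fin 3) (ψ : (Fin 3 → ℝ) → Fin 8 → ℂ) :
    (Fin 3 → ℝ) → Fin 8 → ℂ :=
  fun x => fderiv ℝ ψ x (Pi.single k 1)

/-- The operator `D ψ = Σ γ_k ∂ψ/∂x_k + √2 i ε R Σ λ_k x_k ρ_k ψ`. -/
noncomputable def Dmodel (C : CliffordSystem) (lam : Fin 3 → ℝ) (ε R : ℝ)
    (ψ : (Fin 3 → ℝ) → Fin 8 → ℂ) : (Fin 3 → ℝ) → Fin 8 → ℂ :=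
  fun x => (∑ k : Fin 3, (C.γC k.castSucc).mulVec (pderiv3 k ψ x))
    + ∑ k : Fin 3,
        ((Real.sqrt 2 : ℂ) * Complex.I * (ε : ℂ) * (R : ℂ) * (lam k : ℂ) * (x k : ℂ)) •
          (C.ρC k).mulVec (ψ x)

/-! ### Auxiliary material -/

/-- Matrix-vector multiplication as a **real**-continuous-linear map on `ℂ⁸`. -/
noncomputable def mvL (M : Matrix (Fin 8) (Fin 8) ℂ) : (Fin 8 → ℂ) →L[ℝ] (Fin 8 → ℂ) :=
  (LinearMap.toContinuousLinearMap M.mulVecLin).restrictScalars ℝ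

@[simp] lemma mvL_apply (M : Matrix (Fin 8) (Fin 8) ℂ) (v : Fin 8 → ℂ) :
    mvL M v = M.mulVec v := rfl

lemma mulVec_sumv (M : Matrix (Fin 8) (Fin 8) ℂ) (v : Fin 3 → Fin 8 → ℂ) :
    M.mulVec (∑ k : Fin 3, v k) = ∑ k : Fin 3, M.mulVec (v k) :=
  map_sum M.mulVecLin v Finset.univ

lemma contDiff_pderiv3 {ψ : (Fin 3 → ℝ) → Fin 8 → ℂ} (hψ : ContDiff ℝ (⊤ : ℕ∞) ψ) (k : Fin 3) :
    ContDiff ℝ (⊤ : ℕ∞) (pderiv3 k ψ) := by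
  have h1 : ContDiff ℝ (⊤ : ℕ∞) (fderiv ℝ ψ) := hψ.fderiv_right (by simp)
  exact (ContinuousLinearMap.apply ℝ (Fin 8 → ℂ) (Pi.single k 1 : Fin 3 → ℝ)).contDiff.comp h1

lemma contDiff_coord (c : ℂ) (k : Fin 3) :
    ContDiff ℝ (⊤ : ℕ∞) (fun y : Fin 3 → ℝ => c * ((y k : ℝ) : ℂ)) :=
  contDiff_const.mul (Complex.ofRealCLM.contDiff.comp (contDiff_apply ℝ ℝ k))

lemma fderiv_coord (c : ℂ) (k : Fin 3) (x v : Fin 3 → ℝ) :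
    fderiv ℝ (fun y : Fin 3 → ℝ => c * ((y k : ℝ) : ℂ)) x v = c * (v k : ℂ) := by
  have h : HasFDerivAt (fun y : Fin 3 → ℝ => ((y k : ℝ) : ℂ))
      (Complex.ofRealCLM.comp (ContinuousLinearMap.proj k)) x :=
    (Complex.ofRealCLM.comp ((ContinuousLinearMap.proj k : (Fin 3 → ℝ) →L[ℝ] ℝ))).hasFDerivAt
  rw [(h.const_mul c).fderiv]
  simp [smul_eq_mul]

lemma pderiv3_clm (L : (Fin 8 → ℂ) →L[ℝ] (Fin 8 → ℂ)) (ψ : (Fin 3 → ℝ) → Fin 8 → ℂ)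
    (h : Differentiable ℝ ψ) (k : Fin 3) (x : Fin 3 → ℝ) :
    pderiv3 k (fun y => L (ψ y)) x = L (pderiv3 k ψ x) := by
  unfold pderiv3
  have hc : fderiv ℝ (fun y => L (ψ y)) x = L.comp (fderiv ℝ ψ x) :=
    (L.hasFDerivAt.comp x (h x).hasFDerivAt).fderiv
  rw [hc]; rfl

lemma pderiv3_mulVec (M : Matrix (Fin 8) (Fin 8) ℂ) (ψ : (Fin 3 → ℝ) → Fin 8 → ℂ)
    (h : Differentiable ℝ ψ) (k : Fin 3) (x : Fin 3 → ℝ) :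
    pderiv3 k (fun y => M.mulVec (ψ y)) x = M.mulVec (pderiv3 k ψ x) :=
  pderiv3_clm (mvL M) ψ h k x

lemma contDiff_mulVec (M : Matrix (Fin 8) (Fin 8) ℂ) {ψ : (Fin 3 → ℝ) → Fin 8 → ℂ}
    (h : ContDiff ℝ (⊤ : ℕ∞) ψ) : ContDiff ℝ (⊤ : ℕ∞) (fun y => M.mulVec (ψ y)) :=
  (mvL M).contDiff.comp h

lemma contDiff_csmul {s : (Fin 3 → ℝ) → ℂ} {g : (Fin 3 → ℝ) → Fin 8 → ℂ}
    (hs : ContDiff ℝ (⊤ : ℕ∞) s) (hg : ContDiff ℝ (⊤ : ℕ∞) g) :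
    ContDiff ℝ (⊤ : ℕ∞) (fun y => s y • g y) :=
  ((isBoundedBilinearMap_smul (𝕜 := ℝ) (A := ℂ) (E := Fin 8 → ℂ)).contDiff (n := (⊤ : ℕ∞))).comp (hs.prodMk hg)

lemma pderiv3_add (f g : (Fin 3 → ℝ) → Fin 8 → ℂ) (j : Fin 3) (x : Fin 3 → ℝ)
    (hf : DifferentiableAt ℝ f x) (hg : DifferentiableAt ℝ g x) :
    pderiv3 j (fun y => f y + g y) x = pderiv3 j f x + pderiv3 j g x := by
  unfold pderiv3
  rw [fderiv_fun_add hf hg]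
  rfl

lemma pderiv3_sum (f : Fin 3 → (Fin 3 → ℝ) → Fin 8 → ℂ) (j : Fin 3) (x : Fin 3 → ℝ)
    (hf : ∀ k, DifferentiableAt ℝ (f k) x) :
    pderiv3 j (fun y => ∑ k : Fin 3, f k y) x = ∑ k : Fin 3, pderiv3 j (f k) x := by
  unfold pderiv3
  rw [fderiv_fun_sum (fun k _ => hf k)]
  simp

lemma pderiv3_smul (s : (Fin 3 → ℝ) → ℂ) (g : (Fin 3 → ℝ) → Fin 8 → ℂ) (j : Fin 3)
    (x : Fin 3 → ℝ) (hs : DifferentiableAt ℝ s x) (hg : DifferentiableAt ℝ g x) :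
    pderiv3 j (fun y => s y • g y) x
      = (fderiv ℝ s x (Pi.single j 1)) • g x + s x • pderiv3 j g x := by
  unfold pderiv3
  rw [fderiv_fun_smul hs hg]
  simp [add_comm]

lemma pderiv3_comm {ψ : (Fin 3 → ℝ) → Fin 8 → ℂ} (hψ : ContDiff ℝ (⊤ : ℕ∞) ψ) (j k : Fin 3)
    (x : Fin 3 → ℝ) : pderiv3 j (pderiv3 k ψ) x = pderiv3 k (pderiv3 j ψ) x := by
  have hd : Differentiable ℝ (fderiv ℝ ψ) := (hψ.fderiv_right (m := 1) (WithTop.coe_le_coe.mpr le_top)).differentiable (by simp)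
  have key : ∀ (u v : Fin 3 → ℝ),
      fderiv ℝ (fun y => fderiv ℝ ψ y u) x v = fderiv ℝ (fderiv ℝ ψ) x v u := by
    intro u v
    rw [fderiv_clm_apply (hd x) (differentiableAt_const u)]
    simp
  show fderiv ℝ (fun y => fderiv ℝ ψ y (Pi.single k 1)) x (Pi.single j 1)
      = fderiv ℝ (fun y => fderiv ℝ ψ y (Pi.single j 1)) x (Pi.single k 1)
  rw [key, key]
  exact second_derivative_symmetric (fun y => (hψ.differentiable (by simp) y).hasFDerivAt)
    (hd x).hasFDerivAt _ _

lemma cmap_anticomm {A B : Matrix (Fin 8) (Fin 8) ℝ} (h : A * B + B * A = 0) :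
    A.map (fun r => (r:ℂ)) * B.map (fun r => (r:ℂ))
      + B.map (fun r => (r:ℂ)) * A.map (fun r => (r:ℂ)) = 0 := by
  have e : (fun r : ℝ => (r:ℂ)) = ⇑Complex.ofRealHom := rfl
  rw [e, ← Matrix.map_mul, ← Matrix.map_mul,
    ← Matrix.map_add (⇑Complex.ofRealHom) (fun a b => Complex.ofReal_add a b), h]
  ext i j; simp

lemma cmap_sq {A : Matrix (Fin 8) (Fin 8) ℝ}
    (h : A * A + A * A = (-2 : ℝ) • (1 : Matrix (Fin 8) (Fin 8) ℝ)) :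
    A.map (fun r => (r:ℂ)) * A.map (fun r => (r:ℂ))
      + A.map (fun r => (r:ℂ)) * A.map (fun r => (r:ℂ))
      = (-2 : ℂ) • (1 : Matrix (Fin 8) (Fin 8) ℂ) := by
  have e : (fun r : ℝ => (r:ℂ)) = ⇑Complex.ofRealHom := rfl
  rw [e, ← Matrix.map_mul,
    ← Matrix.map_add (⇑Complex.ofRealHom) (fun a b => Complex.ofReal_add a b), h]
  ext i j
  by_cases hij : i = j <;> simp [Matrix.one_apply, hij]

/-- A generic version of the model operator. -/
noncomputable def Dgen (A B : Fin 3 → Matrix (Fin 8) (Fin 8) ℂ) (μ : ℂ) (lam : Fin 3 → ℝ)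
    (ψ : (Fin 3 → ℝ) → Fin 8 → ℂ) : (Fin 3 → ℝ) → Fin 8 → ℂ :=
  fun x => (∑ k : Fin 3, (A k).mulVec (pderiv3 k ψ x))
    + ∑ k : Fin 3, (μ * (lam k : ℂ) * (x k : ℂ)) • (B k).mulVec (ψ x)

lemma pderiv3_Dgen (A B : Fin 3 → Matrix (Fin 8) (Fin 8) ℂ) (μ : ℂ) (lam : Fin 3 → ℝ)
    (ψ : (Fin 3 → ℝ) → Fin 8 → ℂ) (hψ : ContDiff ℝ (⊤ : ℕ∞) ψ) (j : Fin 3) (x : Fin 3 → ℝ) :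
    pderiv3 j (Dgen A B μ lam ψ) x
      = (∑ k : Fin 3, (A k).mulVec (pderiv3 j (pderiv3 k ψ) x))
        + ∑ k : Fin 3,
            ((μ * (lam k : ℂ) * (((Pi.single j 1 : Fin 3 → ℝ) k : ℝ) : ℂ)) •
                (B k).mulVec (ψ x)
              + (μ * (lam k : ℂ) * (x k : ℂ)) • (B k).mulVec (pderiv3 j ψ x)) := by
  have hψd : Differentiable ℝ ψ := hψ.differentiable (by simp)
  have hm1 : ∀ k : Fin 3, ContDiff ℝ (⊤ : ℕ∞) (fun y => (A k).mulVec (pderiv3 k ψ y)) :=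
    fun k => contDiff_mulVec (A k) (contDiff_pderiv3 hψ k)
  have hm2 : ∀ k : Fin 3,
      ContDiff ℝ (⊤ : ℕ∞) (fun y => (μ * (lam k : ℂ) * ((y k : ℝ) : ℂ)) • (B k).mulVec (ψ y)) :=
    fun k => contDiff_csmul (contDiff_coord (μ * (lam k : ℂ)) k) (contDiff_mulVec (B k) hψ)
  have hS1 : DifferentiableAt ℝ (fun y => ∑ k : Fin 3, (A k).mulVec (pderiv3 k ψ y)) x :=
    ((ContDiff.sum fun k _ => hm1 k).differentiable (by simp)) x
  have hS2 : DifferentiableAt ℝ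
      (fun y => ∑ k : Fin 3, (μ * (lam k : ℂ) * ((y k : ℝ) : ℂ)) • (B k).mulVec (ψ y)) x :=
    ((ContDiff.sum fun k _ => hm2 k).differentiable (by simp)) x
  have hstep : pderiv3 j (Dgen A B μ lam ψ) x
      = pderiv3 j (fun y => ∑ k : Fin 3, (A k).mulVec (pderiv3 k ψ y)) x
        + pderiv3 j
            (fun y => ∑ k : Fin 3, (μ * (lam k : ℂ) * ((y k : ℝ) : ℂ)) • (B k).mulVec (ψ y)) x :=
    pderiv3_add _ _ j x hS1 hS2
  rw [hstep, pderiv3_sum _ j x (fun k => ((hm1 k).differentiable (by simp)) x),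
    pderiv3_sum _ j x (fun k => ((hm2 k).differentiable (by simp)) x)]
  congr 1
  · exact Finset.sum_congr rfl fun k _ => pderiv3_mulVec (A k) (pderiv3 k ψ)
      ((contDiff_pderiv3 hψ k).differentiable (by simp)) j x
  · refine Finset.sum_congr rfl fun k _ => ?_
    rw [pderiv3_smul _ _ j x (((contDiff_coord (μ * (lam k : ℂ)) k).differentiable (by simp)) x)
        (((contDiff_mulVec (B k) hψ).differentiable (by simp)) x),
      fderiv_coord, pderiv3_mulVec (B k) ψ hψd j x]

lemma Dgen_sq (A B : Fin 3 → Matrix (Fin 8) (Fin 8) ℂ) (μ : ℂ) (lam : Fin 3 → ℝ)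
    (hAA : ∀ a b : Fin 3, A a * A b + A b * A a =
      if a = b then (-2 : ℂ) • (1 : Matrix (Fin 8) (Fin 8) ℂ) else 0)
    (hBB : ∀ a b : Fin 3, B a * B b + B b * B a =
      if a = b then (-2 : ℂ) • (1 : Matrix (Fin 8) (Fin 8) ℂ) else 0)
    (hAB : ∀ a b : Fin 3, A a * B b + B b * A a = 0)
    (ψ : (Fin 3 → ℝ) → Fin 8 → ℂ) (hψ : ContDiff ℝ (⊤ : ℕ∞) ψ) (x : Fin 3 → ℝ) :
    Dgen A B μ lam (Dgen A B μ lam ψ) x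
      = -(∑ k : Fin 3, pderiv3 k (pderiv3 k ψ) x)
        + (∑ k : Fin 3, (μ * (lam k : ℂ)) • (A k * B k).mulVec (ψ x))
        + (-(μ ^ 2) * ∑ k : Fin 3, (lam k : ℂ) ^ 2 * (x k : ℂ) ^ 2) • ψ x := by
  have hψd : Differentiable ℝ ψ := hψ.differentiable (by simp)
  -- per-`j` expansion of the first half
  have hj1 : ∀ j : Fin 3, (A j).mulVec (pderiv3 j (Dgen A B μ lam ψ) x)
      = (∑ k : Fin 3, (A j * A k).mulVec (pderiv3 j (pderiv3 k ψ) x))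
        + ((∑ k : Fin 3, (μ * (lam k : ℂ) * (((Pi.single j 1 : Fin 3 → ℝ) k : ℝ) : ℂ)) •
              (A j * B k).mulVec (ψ x))
          + ∑ k : Fin 3, (μ * (lam k : ℂ) * (x k : ℂ)) •
              (A j * B k).mulVec (pderiv3 j ψ x)) := by
    intro j
    rw [pderiv3_Dgen A B μ lam ψ hψ j x, Matrix.mulVec_add, mulVec_sumv, mulVec_sumv]
    simp only [Matrix.mulVec_add, Matrix.mulVec_smul, Matrix.mulVec_mulVec]
    rw [Finset.sum_add_distrib]
  -- per-`j` expansion of the second half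
  have hj2 : ∀ j : Fin 3,
      (μ * (lam j : ℂ) * (x j : ℂ)) • (B j).mulVec (Dgen A B μ lam ψ x)
      = (∑ k : Fin 3, (μ * (lam j : ℂ) * (x j : ℂ)) •
            (B j * A k).mulVec (pderiv3 k ψ x))
        + ∑ k : Fin 3, ((μ * (lam j : ℂ) * (x j : ℂ)) * (μ * (lam k : ℂ) * (x k : ℂ))) •
            (B j * B k).mulVec (ψ x) := by
    intro j
    show (μ * (lam j : ℂ) * (x j : ℂ)) • (B j).mulVec
        ((∑ k : Fin 3, (A k).mulVec (pderiv3 k ψ x))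
          + ∑ k : Fin 3, (μ * (lam k : ℂ) * (x k : ℂ)) • (B k).mulVec (ψ x)) = _
    rw [Matrix.mulVec_add, mulVec_sumv, mulVec_sumv, smul_add, Finset.smul_sum,
      Finset.smul_sum]
    simp only [Matrix.mulVec_smul, Matrix.mulVec_mulVec, smul_smul]
  have expand : Dgen A B μ lam (Dgen A B μ lam ψ) x
      = (∑ j : Fin 3, ∑ k : Fin 3, (A j * A k).mulVec (pderiv3 j (pderiv3 k ψ) x))
        + ((∑ j : Fin 3, ∑ k : Fin 3,
              (μ * (lam k : ℂ) * (((Pi.single j 1 : Fin 3 → ℝ) k : ℝ) : ℂ)) •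
                (A j * B k).mulVec (ψ x))
          + ∑ j : Fin 3, ∑ k : Fin 3, (μ * (lam k : ℂ) * (x k : ℂ)) •
                (A j * B k).mulVec (pderiv3 j ψ x))
        + ((∑ j : Fin 3, ∑ k : Fin 3, (μ * (lam j : ℂ) * (x j : ℂ)) •
              (B j * A k).mulVec (pderiv3 k ψ x))
          + ∑ j : Fin 3, ∑ k : Fin 3,
              ((μ * (lam j : ℂ) * (x j : ℂ)) * (μ * (lam k : ℂ) * (x k : ℂ))) •
                (B j * B k).mulVec (ψ x)) := by
    show (∑ j : Fin 3, (A j).mulVec (pderiv3 j (Dgen A B μ lam ψ) x))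
        + (∑ j : Fin 3, (μ * (lam j : ℂ) * (x j : ℂ)) •
            (B j).mulVec (Dgen A B μ lam ψ x)) = _
    rw [Finset.sum_congr rfl fun j _ => hj1 j, Finset.sum_congr rfl fun j _ => hj2 j,
      Finset.sum_add_distrib, Finset.sum_add_distrib, Finset.sum_add_distrib]
  rw [expand]
  -- the pure second-derivative term
  have hT1 : (∑ j : Fin 3, ∑ k : Fin 3, (A j * A k).mulVec (pderiv3 j (pderiv3 k ψ) x))
      = -(∑ k : Fin 3, pderiv3 k (pderiv3 k ψ) x) := by
    apply smul_right_injective (Fin 8 → ℂ) (two_ne_zero (α := ℂ))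
    beta_reduce
    rw [two_smul]
    nth_rewrite 2 [Finset.sum_comm]
    rw [← Finset.sum_add_distrib]
    have : ∀ j : Fin 3,
        ((∑ k : Fin 3, (A j * A k).mulVec (pderiv3 j (pderiv3 k ψ) x))
          + ∑ k : Fin 3, (A k * A j).mulVec (pderiv3 k (pderiv3 j ψ) x))
        = (-2 : ℂ) • pderiv3 j (pderiv3 j ψ) x := by
      intro j
      rw [← Finset.sum_add_distrib]
      have hterm : ∀ k : Fin 3,
          (A j * A k).mulVec (pderiv3 j (pderiv3 k ψ) x)
            + (A k * A j).mulVec (pderiv3 k (pderiv3 j ψ) x)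
          = (if j = k then (-2 : ℂ) • (1 : Matrix (Fin 8) (Fin 8) ℂ) else 0).mulVec
              (pderiv3 j (pderiv3 k ψ) x) := by
        intro k
        rw [pderiv3_comm hψ k j x, ← Matrix.add_mulVec, hAA j k]
      rw [Finset.sum_congr rfl fun k _ => hterm k,
        Finset.sum_eq_single j (fun k _ hk => by rw [if_neg (Ne.symm hk), Matrix.zero_mulVec])
          (by simp)]
      rw [if_pos rfl, Matrix.smul_mulVec, Matrix.one_mulVec]
    rw [Finset.sum_congr rfl fun j _ => this j, smul_neg, ← Finset.smul_sum, ← neg_smul]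
  -- the zeroth order γρ term
  have hT2 : (∑ j : Fin 3, ∑ k : Fin 3,
      (μ * (lam k : ℂ) * (((Pi.single j 1 : Fin 3 → ℝ) k : ℝ) : ℂ)) •
        (A j * B k).mulVec (ψ x))
      = ∑ k : Fin 3, (μ * (lam k : ℂ)) • (A k * B k).mulVec (ψ x) := by
    refine Finset.sum_congr rfl fun j _ => ?_
    rw [Finset.sum_eq_single j
      (fun k _ hk => by rw [Pi.single_eq_of_ne hk]; simp) (by simp)]
    rw [Pi.single_eq_same]
    norm_num
  -- the two cancelling first-order terms
  have hT34 : (∑ j : Fin 3, ∑ k : Fin 3, (μ * (lam k : ℂ) * (x k : ℂ)) •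
        (A j * B k).mulVec (pderiv3 j ψ x))
      + (∑ j : Fin 3, ∑ k : Fin 3, (μ * (lam j : ℂ) * (x j : ℂ)) •
          (B j * A k).mulVec (pderiv3 k ψ x)) = 0 := by
    nth_rewrite 2 [Finset.sum_comm]
    rw [← Finset.sum_add_distrib]
    refine Finset.sum_eq_zero fun j _ => ?_
    rw [← Finset.sum_add_distrib]
    refine Finset.sum_eq_zero fun k _ => ?_
    rw [← smul_add, ← Matrix.add_mulVec, hAB j k, Matrix.zero_mulVec, smul_zero]
  -- the potential term
  have hT5 : (∑ j : Fin 3, ∑ k : Fin 3,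
        ((μ * (lam j : ℂ) * (x j : ℂ)) * (μ * (lam k : ℂ) * (x k : ℂ))) •
          (B j * B k).mulVec (ψ x))
      = (-(μ ^ 2) * ∑ k : Fin 3, (lam k : ℂ) ^ 2 * (x k : ℂ) ^ 2) • ψ x := by
    apply smul_right_injective (Fin 8 → ℂ) (two_ne_zero (α := ℂ))
    beta_reduce
    rw [two_smul]
    nth_rewrite 2 [Finset.sum_comm]
    rw [← Finset.sum_add_distrib]
    have : ∀ j : Fin 3,
        ((∑ k : Fin 3, ((μ * (lam j : ℂ) * (x j : ℂ)) * (μ * (lam k : ℂ) * (x k : ℂ))) •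
            (B j * B k).mulVec (ψ x))
          + ∑ k : Fin 3, ((μ * (lam k : ℂ) * (x k : ℂ)) * (μ * (lam j : ℂ) * (x j : ℂ))) •
            (B k * B j).mulVec (ψ x))
        = ((-2 : ℂ) * (μ ^ 2 * ((lam j : ℂ) ^ 2 * (x j : ℂ) ^ 2))) • ψ x := by
      intro j
      rw [← Finset.sum_add_distrib]
      have hterm : ∀ k : Fin 3,
          ((μ * (lam j : ℂ) * (x j : ℂ)) * (μ * (lam k : ℂ) * (x k : ℂ))) •
              (B j * B k).mulVec (ψ x)
            + ((μ * (lam k : ℂ) * (x k : ℂ)) * (μ * (lam j : ℂ) * (x j : ℂ))) •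
              (B k * B j).mulVec (ψ x)
          = ((μ * (lam j : ℂ) * (x j : ℂ)) * (μ * (lam k : ℂ) * (x k : ℂ))) •
              ((if j = k then (-2 : ℂ) • (1 : Matrix (Fin 8) (Fin 8) ℂ) else 0).mulVec
                (ψ x)) := by
        intro k
        rw [mul_comm (μ * (lam k : ℂ) * (x k : ℂ)) (μ * (lam j : ℂ) * (x j : ℂ)),
          ← smul_add, ← Matrix.add_mulVec, hBB j k]
      rw [Finset.sum_congr rfl fun k _ => hterm k,
        Finset.sum_eq_single j
          (fun k _ hk => by rw [if_neg (Ne.symm hk), Matrix.zero_mulVec, smul_zero]) (by simp)]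
      rw [if_pos rfl, Matrix.smul_mulVec, Matrix.one_mulVec, smul_smul]
      congr 1
      ring
    rw [Finset.sum_congr rfl fun j _ => this j, smul_smul, ← Finset.sum_smul]
    congr 1
    rw [Finset.mul_sum, Finset.mul_sum]
    refine Finset.sum_congr rfl fun j _ => ?_
    ring
  rw [hT1, hT2, hT5]
  have h3 : (∑ j : Fin 3, ∑ k : Fin 3, (μ * (lam k : ℂ) * (x k : ℂ)) •
        (A j * B k).mulVec (pderiv3 j ψ x))
      = -(∑ j : Fin 3, ∑ k : Fin 3, (μ * (lam j : ℂ) * (x j : ℂ)) •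
          (B j * A k).mulVec (pderiv3 k ψ x)) :=
    eq_neg_of_add_eq_zero_left hT34
  rw [h3]
  abel

/-- The Bochner–Weitzenböck identity (4.6):
`D(Dψ) = −Σ ∂²ψ/∂x_k² + √2 R ε Σ λ_k (iγ_kρ_k) ψ + 2R² (Σ λ_k² x_k²) ψ`. -/
theorem Dmodel_sq (C : CliffordSystem) (lam : Fin 3 → ℝ) (hlam : ∀ k, 0 < lam k)
    (ε : ℝ) (hε : ε = 1 ∨ ε = -1) (R : ℝ) (hR : 0 < R)
    (ψ : (Fin 3 → ℝ) → Fin 8 → ℂ) (hψ : ContDiff ℝ (⊤ : ℕ∞) ψ) (x : Fin 3 → ℝ) :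
    Dmodel C lam ε R (Dmodel C lam ε R ψ) x =
      -(∑ k : Fin 3, pderiv3 k (pderiv3 k ψ) x)
      + ((Real.sqrt 2 : ℂ) * (R : ℂ) * (ε : ℂ)) •
          (∑ k : Fin 3, (lam k : ℂ) •
            ((Complex.I • (C.γC k.castSucc * C.ρC k)).mulVec (ψ x)))
      + ((2 : ℂ) * (R : ℂ) ^ 2 * ∑ k : Fin 3, (lam k : ℂ) ^ 2 * (x k : ℂ) ^ 2) • ψ x := by
  have hAA : ∀ a b : Fin 3, C.γC a.castSucc * C.γC b.castSucc
      + C.γC b.castSucc * C.γC a.castSucc =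
      if a = b then (-2 : ℂ) • (1 : Matrix (Fin 8) (Fin 8) ℂ) else 0 := by
    intro a b
    by_cases hab : a = b
    · subst hab
      rw [if_pos rfl]
      exact cmap_sq (by simpa using C.γγ a.castSucc a.castSucc)
    · rw [if_neg hab]
      refine cmap_anticomm ?_
      have := C.γγ a.castSucc b.castSucc
      rwa [if_neg (by simpa [Fin.castSucc_inj] using hab)] at this
  have hBB : ∀ a b : Fin 3, C.ρC a * C.ρC b + C.ρC b * C.ρC a =
      if a = b then (-2 : ℂ) • (1 : Matrix (Fin 8) (Fin 8) ℂ) else 0 := by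
    intro a b
    by_cases hab : a = b
    · subst hab
      rw [if_pos rfl]
      exact cmap_sq (by simpa using C.ρρ a a)
    · rw [if_neg hab]
      refine cmap_anticomm ?_
      have := C.ρρ a b
      rwa [if_neg hab] at this
  have hAB : ∀ a b : Fin 3, C.γC a.castSucc * C.ρC b + C.ρC b * C.γC a.castSucc = 0 := by
    intro a b
    refine cmap_anticomm ?_
    rw [add_comm]
    exact C.ργ b a.castSucc
  have hDeq : Dmodel C lam ε R = Dgen (fun k => C.γC k.castSucc) (fun k => C.ρC k)
      ((Real.sqrt 2 : ℂ) * Complex.I * (ε : ℂ) * (R : ℂ)) lam := rfl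
  rw [hDeq]
  rw [Dgen_sq _ _ _ _ hAA hBB hAB ψ hψ x]
  have hμ2 : -(((Real.sqrt 2 : ℂ) * Complex.I * (ε : ℂ) * (R : ℂ)) ^ 2)
      = (2 : ℂ) * (R : ℂ) ^ 2 := by
    have h2 : ((Real.sqrt 2 : ℝ) : ℂ) ^ 2 = 2 := by
      rw [← Complex.ofReal_pow, Real.sq_sqrt (by norm_num : (0:ℝ) ≤ 2)]
      norm_num
    have hε2 : (ε : ℂ) ^ 2 = 1 := by
      rcases hε with h | h <;> simp [h]
    have hexp : ((Real.sqrt 2 : ℂ) * Complex.I * (ε : ℂ) * (R : ℂ)) ^ 2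
        = ((Real.sqrt 2 : ℝ) : ℂ) ^ 2 * Complex.I ^ 2 * (ε : ℂ) ^ 2 * (R : ℂ) ^ 2 := by
      ring
    rw [hexp, h2, Complex.I_sq, hε2]
    ring
  rw [hμ2]
  congr 1
  congr 1
  rw [Finset.smul_sum]
  refine Finset.sum_congr rfl fun k _ => ?_
  rw [Matrix.smul_mulVec, smul_smul, smul_smul]
  congr 1
  ring
end

section
/- Let γ and ρ be real 8×8 matrices with γ antisymmetric and γ² = −I, ρ symmetric and ρ² = I, and γρ + ργ = 0, and fix R > 0. Then the set of smooth square-integrable maps ψ : ℝ → ℝ⁸ satisfying γ ψ'(x) + √2 R x ρ ψ(x) = 0 for all x ∈ ℝ is exactly { x ↦ exp(−(R/√2) x²) · η : η ∈ ℝ⁸ with γρ η = −η }; in particular it is a real vector space of dimension 4. -/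
open Matrix MeasureTheory

private lemma trace_mulVecLin8 (P : Matrix (Fin 8) (Fin 8) ℝ) :
    LinearMap.trace ℝ (Fin 8 → ℝ) P.mulVecLin = P.trace := by
  rw [← Matrix.toLin'_apply', LinearMap.trace_eq_matrix_trace ℝ (Pi.basisFun ℝ (Fin 8)),
    LinearMap.toMatrix_eq_toMatrix', LinearMap.toMatrix'_toLin']

private lemma finrank_part (J : Matrix (Fin 8) (Fin 8) ℝ) (hJ2 : J * J = 1) (htr : J.trace = 0) :
    Module.finrank ℝ (Module.End.eigenspace J.mulVecLin (-1)) = 4 := by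
  set P : Matrix (Fin 8) (Fin 8) ℝ := (2⁻¹ : ℝ) • (1 - J) with hP
  have hJP : J * P = -P := by
    rw [hP, Matrix.mul_smul, Matrix.mul_sub, Matrix.mul_one, hJ2]
    rw [← smul_neg]; congr 1; noncomm_ring
  have hproj : LinearMap.IsProj (Module.End.eigenspace J.mulVecLin (-1)) P.mulVecLin := by
    constructor
    · intro x
      rw [Module.End.mem_eigenspace_iff]
      show J.mulVecLin (P.mulVec x) = _
      simp only [mulVecLin_apply, mulVec_mulVec, hJP, neg_mulVec, neg_smul, one_smul]
    · intro x hx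
      rw [Module.End.mem_eigenspace_iff] at hx
      have hx' : J.mulVec x = -x := by simpa using hx
      show P.mulVec x = x
      rw [hP, smul_mulVec, sub_mulVec, one_mulVec, hx', sub_neg_eq_add]
      rw [← two_smul ℝ x, smul_smul]; norm_num
  have htr' : LinearMap.trace ℝ (Fin 8 → ℝ) P.mulVecLin = 4 := by
    rw [trace_mulVecLin8, hP, Matrix.trace_smul, Matrix.trace_sub, htr, Matrix.trace_one]
    norm_num
  have := hproj.trace
  rw [htr'] at this
  exact_mod_cast this.symm

private lemma scalar_ode (k : ℝ) (g : ℝ → ℝ) (hg : ∀ x, HasDerivAt g (k * x * g x) x) (x : ℝ) :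
    g x = g 0 * Real.exp (k * x ^ 2 / 2) := by
  set G : ℝ → ℝ := fun x => g x * Real.exp (-k * x ^ 2 / 2) with hG
  have hE : ∀ y : ℝ, HasDerivAt (fun x : ℝ => Real.exp (-k * x ^ 2 / 2))
      (Real.exp (-k * y ^ 2 / 2) * (-k * y)) y := by
    intro y
    have h1 : HasDerivAt (fun x : ℝ => -k * x ^ 2 / 2) (-k * y) y := by
      have := ((hasDerivAt_pow 2 y).const_mul (-k)).div_const 2
      exact this.congr_deriv (by ring)
    exact h1.exp.congr_deriv rfl
  have hG' : ∀ y, HasDerivAt G 0 y := by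
    intro y
    have := (hg y).mul (hE y)
    exact this.congr_deriv (by ring)
  have hconst : ∀ y, G y = G 0 :=
    fun y => is_const_of_deriv_eq_zero (fun z => (hG' z).differentiableAt)
      (fun z => (hG' z).deriv) y 0
  have := hconst x
  have hne : Real.exp (-k * x ^ 2 / 2) ≠ 0 := Real.exp_ne_zero _
  rw [hG] at this
  simp only at this
  have hx : g x = g 0 * Real.exp (-k * 0 ^ 2 / 2) / Real.exp (-k * x ^ 2 / 2) := by
    field_simp at this ⊢; linarith [this]
  rw [hx, mul_div_assoc, ← Real.exp_sub]
  congr 2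
  ring

private lemma not_int (f : ℝ → ℝ) (C : ℝ) (hC : 0 < C) (hf : ∀ x, C ≤ f x)
    (hInt : Integrable f) : False := by
  have : Integrable (fun _ : ℝ => C) := by
    refine hInt.mono' aestronglyMeasurable_const (ae_of_all _ fun x => ?_)
    rw [Real.norm_eq_abs, abs_of_pos hC]; exact hf x
  rcases integrable_const_iff.mp this with h | h
  · exact hC.ne' h
  · have h := h.measure_univ_lt_top; rw [Real.volume_univ] at h; exact (lt_irrefl _ h).elim

/-- kernel description in Lemma 5.7.  For `γ` real antisymmetric with
`γ² = −I`, `ρ` real symmetric with `ρ² = I`, `γρ + ργ = 0` and `R > 0`, the set of smooth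
square-integrable solutions of `γψ' + √2 R x ρψ = 0` on `ℝ` is exactly the set of maps
`x ↦ exp(−(R/√2)x²) η` with `γρ η = −η`; in particular (the `−1` eigenspace of `γρ` having
dimension `4`) it is a real vector space of dimension `4`. -/
theorem ode_kernel_description (γ ρ : Matrix (Fin 8) (Fin 8) ℝ)
    (hγa : γᵀ = -γ) (hγ2 : γ * γ = -1)
    (hρs : ρᵀ = ρ) (hρ2 : ρ * ρ = 1)
    (hanti : γ * ρ + ρ * γ = 0) (R : ℝ) (hR : 0 < R) :
    {ψ : ℝ → Fin 8 → ℝ | ContDiff ℝ (⊤ : ℕ∞) ψ ∧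
        MeasureTheory.Integrable (fun x => ∑ i : Fin 8, ‖ψ x i‖ ^ 2) ∧
        ∀ x : ℝ, γ.mulVec (deriv ψ x) + (Real.sqrt 2 * R * x) • ρ.mulVec (ψ x) = 0}
      = {ψ : ℝ → Fin 8 → ℝ | ∃ η : Fin 8 → ℝ, (γ * ρ).mulVec η = -η ∧
          ψ = fun x => Real.exp (-(R / Real.sqrt 2) * x ^ 2) • η} ∧
    Module.finrank ℝ (Module.End.eigenspace (γ * ρ).mulVecLin (-1)) = 4 := by
  have h2 : Real.sqrt 2 * Real.sqrt 2 = 2 := Real.mul_self_sqrt (by norm_num)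
  have hs2 : (0:ℝ) < Real.sqrt 2 := Real.sqrt_pos.mpr (by norm_num)
  set c : ℝ := Real.sqrt 2 * R with hc
  have hcpos : 0 < c := mul_pos hs2 hR
  set J : Matrix (Fin 8) (Fin 8) ℝ := γ * ρ with hJ
  have hργ : ρ * γ = -(γ * ρ) := by
    have h := hanti
    exact eq_neg_of_add_eq_zero_right hanti
  have hJ2 : J * J = 1 := by
    calc J * J = γ * (ρ * γ) * ρ := by rw [hJ]; noncomm_ring
    _ = γ * (-(γ * ρ)) * ρ := by rw [hργ]
    _ = -((γ * γ) * (ρ * ρ)) := by noncomm_ring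
    _ = 1 := by rw [hγ2, hρ2]; simp
  have htr : J.trace = 0 := by
    have h1 : J.trace = (ρ * γ).trace := Matrix.trace_mul_comm γ ρ
    rw [hργ, Matrix.trace_neg, ← hJ] at h1
    linarith
  have hsymm : Jᵀ = J := by
    rw [hJ, Matrix.transpose_mul, hρs, hγa, Matrix.mul_neg, hργ, neg_neg]
  have hγJ : γ * J = -ρ := by
    rw [hJ, ← mul_assoc, hγ2]; simp
  have hρeqγ : ∀ η : Fin 8 → ℝ, J.mulVec η = -η → ρ.mulVec η = γ.mulVec η := by
    intro η hη
    have := congrArg (fun v => γ.mulVec v) hη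
    simp only [mulVec_mulVec, hγJ, neg_mulVec, mulVec_neg] at this
    exact neg_inj.mp this
  constructor
  · ext ψ
    simp only [Set.mem_setOf_eq]
    constructor
    · rintro ⟨hsm, hint, hode⟩
      have hd : ∀ x, HasDerivAt ψ (deriv ψ x) x :=
        fun x => (hsm.differentiable (by simp) x).hasDerivAt
      have hψ' : ∀ x, deriv ψ x = (c * x) • J.mulVec (ψ x) := by
        intro x
        have h1 : γ.mulVec (deriv ψ x) = -((c * x) • ρ.mulVec (ψ x)) :=
          eq_neg_of_add_eq_zero_left (hode x)
        have h3 := congrArg (fun v => γ.mulVec v) h1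
        simp only [mulVec_mulVec, hγ2, mulVec_neg, mulVec_smul, neg_mulVec, one_mulVec,
          neg_neg] at h3
        have h4 : deriv ψ x = (c * x) • (γ * ρ).mulVec (ψ x) := by
          rw [← mulVec_mulVec]
          simpa using h3
        rw [h4, ← hJ]
      have hcomp : ∀ x, ∀ i, HasDerivAt (fun y => ψ y i) (deriv ψ x i) x :=
        fun x => hasDerivAt_pi.mp (hd x)
      have hJd : ∀ x i, HasDerivAt (fun y => J.mulVec (ψ y) i) (J.mulVec (deriv ψ x) i) x := by
        intro x i
        simp only [mulVec, dotProduct]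
        exact HasDerivAt.fun_sum (fun j _ => (hcomp x j).const_mul (J i j))
      have hJJψ : ∀ x, J.mulVec (J.mulVec (ψ x)) = ψ x := by
        intro x; rw [mulVec_mulVec, hJ2, one_mulVec]
      have hu : ∀ i x, HasDerivAt (fun y => ψ y i + J.mulVec (ψ y) i)
          (c * x * (ψ x i + J.mulVec (ψ x) i)) x := by
        intro i x
        have := (hcomp x i).add (hJd x i)
        refine this.congr_deriv ?_
        rw [hψ', mulVec_smul, hJJψ]
        simp only [Pi.add_apply, Pi.smul_apply, smul_eq_mul]
        ring
      have hv : ∀ i x, HasDerivAt (fun y => ψ y i - J.mulVec (ψ y) i)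
          ((-c) * x * (ψ x i - J.mulVec (ψ x) i)) x := by
        intro i x
        have := (hcomp x i).sub (hJd x i)
        refine this.congr_deriv ?_
        rw [hψ', mulVec_smul, hJJψ]
        simp only [Pi.sub_apply, Pi.smul_apply, smul_eq_mul]
        ring
      set a : Fin 8 → ℝ := ψ 0 + J.mulVec (ψ 0) with ha
      set b : Fin 8 → ℝ := ψ 0 - J.mulVec (ψ 0) with hb
      have hu' : ∀ i x, ψ x i + J.mulVec (ψ x) i = a i * Real.exp (c * x ^ 2 / 2) :=
        fun i x => scalar_ode c _ (hu i) x
      have hv' : ∀ i x, ψ x i - J.mulVec (ψ x) i = b i * Real.exp (-c * x ^ 2 / 2) :=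
        fun i x => by simpa [hb] using scalar_ode (-c) _ (hv i) x
      have hψx : ∀ x i, ψ x i =
          (a i * Real.exp (c * x ^ 2 / 2) + b i * Real.exp (-c * x ^ 2 / 2)) / 2 := by
        intro x i
        have h1 := hu' i x; have h2 := hv' i x
        linarith
      have hJa : J.mulVec a = a := by
        rw [ha, mulVec_add, hJJψ]; abel
      have hJb : J.mulVec b = -b := by
        rw [hb, mulVec_sub, hJJψ]; abel
      have horth : a ⬝ᵥ b = 0 := by
        have h1 : (J.mulVec a) ⬝ᵥ b = (J.mulVec b) ⬝ᵥ a := by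
          rw [dotProduct_comm (J *ᵥ a) b, dotProduct_mulVec, ← hsymm, vecMul_transpose,
            hsymm]
        rw [hJa, hJb] at h1
        have h2' : b ⬝ᵥ a = a ⬝ᵥ b := dotProduct_comm b a
        simp only [neg_dotProduct] at h1
        linarith
      have hsum : ∀ x, (∑ i : Fin 8, ‖ψ x i‖ ^ 2) =
          ((a ⬝ᵥ a) * Real.exp (c * x ^ 2 / 2) ^ 2
            + (b ⬝ᵥ b) * Real.exp (-c * x ^ 2 / 2) ^ 2) / 4 := by
        intro x
        set EA := Real.exp (c * x ^ 2 / 2) with hEA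
        set EB := Real.exp (-c * x ^ 2 / 2) with hEB
        have hEE : EA * EB = 1 := by
          rw [hEA, hEB, ← Real.exp_add, show c * x ^ 2 / 2 + -c * x ^ 2 / 2 = 0 by ring,
            Real.exp_zero]
        calc (∑ i : Fin 8, ‖ψ x i‖ ^ 2)
            = ∑ i : Fin 8, ((a i * a i) * (EA ^ 2 / 4) + (b i * b i) * (EB ^ 2 / 4)
                + (a i * b i) * (EA * EB / 2)) :=
              Finset.sum_congr rfl fun i _ => by
                rw [Real.norm_eq_abs, sq_abs, hψx x i]; ring
          _ = (a ⬝ᵥ a) * (EA ^ 2 / 4) + (b ⬝ᵥ b) * (EB ^ 2 / 4)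
                + (a ⬝ᵥ b) * (EA * EB / 2) := by
              rw [Finset.sum_add_distrib, Finset.sum_add_distrib, ← Finset.sum_mul,
                ← Finset.sum_mul, ← Finset.sum_mul]
              rfl
          _ = _ := by rw [horth, hEE]; ring
      rw [funext hsum] at hint
      have hann : 0 ≤ a ⬝ᵥ a := Finset.sum_nonneg fun i _ => mul_self_nonneg _
      have hbnn : 0 ≤ b ⬝ᵥ b := Finset.sum_nonneg fun i _ => mul_self_nonneg _
      have ha0 : a = 0 := by
        by_contra hne
        have hane : a ⬝ᵥ a ≠ 0 := fun h => hne (dotProduct_self_eq_zero.mp h)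
        have hapos : 0 < a ⬝ᵥ a := lt_of_le_of_ne hann (Ne.symm hane)
        refine not_int _ ((a ⬝ᵥ a) / 4) (by linarith) (fun x => ?_) hint
        have hEA : 1 ≤ Real.exp (c * x ^ 2 / 2) := Real.one_le_exp (by positivity)
        have hEB : 0 ≤ Real.exp (-c * x ^ 2 / 2) ^ 2 := sq_nonneg _
        have hEA2 : 1 ≤ Real.exp (c * x ^ 2 / 2) ^ 2 := by nlinarith
        have h5 := mul_le_mul_of_nonneg_left hEA2 hann
        have h6 := mul_nonneg hbnn hEB
        rw [mul_one] at h5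
        linarith
      refine ⟨(2⁻¹ : ℝ) • b, ?_, ?_⟩
      · rw [mulVec_smul, hJb, smul_neg]
      · funext x
        funext i
        have h1 := hψx x i
        rw [ha0] at h1
        simp only [Pi.zero_apply, zero_mul, zero_add] at h1
        have hdiv : R / Real.sqrt 2 = Real.sqrt 2 * R / 2 := by
          rw [div_eq_div_iff hs2.ne' (by norm_num : (2:ℝ) ≠ 0)]
          linear_combination (-R) * h2
        have hexp : -(R / Real.sqrt 2) * x ^ 2 = -c * x ^ 2 / 2 := by
          rw [hc, hdiv]; ring
        simp only [Pi.smul_apply, smul_eq_mul, hexp]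
        rw [h1]; ring
    · rintro ⟨η, hη, rfl⟩
      have hρη : ρ.mulVec η = γ.mulVec η := hρeqγ η hη
      have hdiv : R / Real.sqrt 2 = Real.sqrt 2 * R / 2 := by
        rw [div_eq_div_iff hs2.ne' (by norm_num : (2:ℝ) ≠ 0)]
        linear_combination (-R) * h2
      have hco : 2 * (R / Real.sqrt 2) = Real.sqrt 2 * R := by
        rw [hdiv]; ring
      refine ⟨?_, ?_, ?_⟩
      · have h1 : ContDiff ℝ (⊤ : ℕ∞) (fun x : ℝ => Real.exp (-(R / Real.sqrt 2) * x ^ 2)) := by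
          fun_prop
        exact h1.smul contDiff_const
      · have heq : (fun x : ℝ => ∑ i : Fin 8,
            ‖(Real.exp (-(R / Real.sqrt 2) * x ^ 2) • η) i‖ ^ 2)
            = fun x => (∑ i : Fin 8, η i ^ 2) * Real.exp (-(Real.sqrt 2 * R) * x ^ 2) := by
          funext x
          simp only [Pi.smul_apply, smul_eq_mul, Real.norm_eq_abs, sq_abs, mul_pow]
          rw [← Finset.mul_sum, mul_comm]
          congr 1
          rw [← Real.exp_nat_mul]
          congr 1
          push_cast
          linear_combination -x ^ 2 * hco
        rw [heq]
        exact (integrable_exp_neg_mul_sq (mul_pos hs2 hR)).const_mul _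
      · intro x
        have hq : HasDerivAt (fun y : ℝ => -(R / Real.sqrt 2) * y ^ 2)
            (-(R / Real.sqrt 2) * (2 * x)) x := by
          have := (hasDerivAt_pow 2 x).const_mul (-(R / Real.sqrt 2))
          exact this.congr_deriv (by ring)
        have hD : HasDerivAt (fun y : ℝ => Real.exp (-(R / Real.sqrt 2) * y ^ 2) • η)
            ((Real.exp (-(R / Real.sqrt 2) * x ^ 2) * (-(R / Real.sqrt 2) * (2 * x))) • η)
            x := hq.exp.smul_const η
        rw [hD.deriv]
        rw [mulVec_smul, mulVec_smul, hρη, smul_smul, ← add_smul]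
        have hco2 : Real.exp (-(R / Real.sqrt 2) * x ^ 2) * (-(R / Real.sqrt 2) * (2 * x))
            + Real.sqrt 2 * R * x * Real.exp (-(R / Real.sqrt 2) * x ^ 2) = 0 := by
          linear_combination (-(x * Real.exp (-(R / Real.sqrt 2) * x ^ 2))) * hco
        rw [hco2, zero_smul]
  · exact finrank_part J hJ2 htr
end

section
/- Suppose p ≥ 3 and q ≥ 3, and let κ, ω ∈ ℚ^p × ℚ^q be such that ω is not a rational multiple of κ. Then there exists t ∈ ℚ^p × ℚ^q with B(t, t) = 0, B(t, κ) = 0 and B(t, ω) ≠ 0. -/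
/-- The odd indefinite unimodular form `B((x,y),(x',y')) = Σ x_i x'_i − Σ y_α y'_α` on
`ℚ^p × ℚ^q`. -/
def Bodd (p q : ℕ) (u v : (Fin p → ℚ) × (Fin q → ℚ)) : ℚ :=
  (∑ i : Fin p, u.1 i * v.1 i) - ∑ a : Fin q, u.2 a * v.2 a

namespace BoddAux

variable {p q : ℕ}

lemma Bodd_comm (u v : (Fin p → ℚ) × (Fin q → ℚ)) : Bodd p q u v = Bodd p q v u := by
  simp [Bodd, mul_comm]

lemma Bodd_smul_left (c : ℚ) (u w : (Fin p → ℚ) × (Fin q → ℚ)) :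
    Bodd p q (c • u) w = c * Bodd p q u w := by
  simp [Bodd, Finset.mul_sum, mul_sub, mul_assoc]

lemma Bodd_sub_left (u v w : (Fin p → ℚ) × (Fin q → ℚ)) :
    Bodd p q (u - v) w = Bodd p q u w - Bodd p q v w := by
  simp [Bodd, sub_mul, Finset.sum_sub_distrib]
  ring

lemma Bodd_smul_right (c : ℚ) (u w : (Fin p → ℚ) × (Fin q → ℚ)) :
    Bodd p q u (c • w) = c * Bodd p q u w := by
  rw [Bodd_comm, Bodd_smul_left, Bodd_comm]

lemma Bodd_sub_right (u v w : (Fin p → ℚ) × (Fin q → ℚ)) :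
    Bodd p q u (v - w) = Bodd p q u v - Bodd p q u w := by
  rw [Bodd_comm, Bodd_sub_left, Bodd_comm u v, Bodd_comm u w]

def vv (i : Fin p) (a : Fin q) (ε : ℚ) : (Fin p → ℚ) × (Fin q → ℚ) :=
  (Pi.single i 1, Pi.single a ε)

lemma Bodd_vv_left (i : Fin p) (a : Fin q) (ε : ℚ) (u : (Fin p → ℚ) × (Fin q → ℚ)) :
    Bodd p q (vv i a ε) u = u.1 i - ε * u.2 a := by
  simp [Bodd, vv, Pi.single_apply, ite_mul]

lemma Bodd_vv_self (i : Fin p) (a : Fin q) (ε : ℚ) (hε : ε * ε = 1) :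
    Bodd p q (vv i a ε) (vv i a ε) = 0 := by
  rw [Bodd_vv_left]
  simp [vv]
  linear_combination -hε

lemma Bodd_vv_ne (i j : Fin p) (a b : Fin q) (ε δ : ℚ) (hij : i ≠ j) (hab : a ≠ b) :
    Bodd p q (vv i a ε) (vv j b δ) = 0 := by
  rw [Bodd_vv_left]
  simp [vv, Pi.single_apply, hij, hab]

end BoddAux


/-- Section 3d, non-spin case.  If `p, q ≥ 3` and `ω` is not a rational
multiple of `κ`, then there is `t` with `B(t,t) = 0`, `B(t,κ) = 0` and `B(t,ω) ≠ 0`. -/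
theorem exists_isotropic_class_odd (p q : ℕ) (hp : 3 ≤ p) (hq : 3 ≤ q)
    (κ ω : (Fin p → ℚ) × (Fin q → ℚ)) (hω : ∀ c : ℚ, ω ≠ c • κ) :
    ∃ t : (Fin p → ℚ) × (Fin q → ℚ),
      Bodd p q t t = 0 ∧ Bodd p q t κ = 0 ∧ Bodd p q t ω ≠ 0 := by
  classical
  by_contra hcon
  push_neg at hcon
  open BoddAux in
  have ntp : Nontrivial (Fin p) := ⟨⟨⟨0, by omega⟩, ⟨1, by omega⟩, by simp⟩⟩
  have ntq : Nontrivial (Fin q) := ⟨⟨⟨0, by omega⟩, ⟨1, by omega⟩, by simp⟩⟩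
  -- Step 1 : single isotropic vectors orthogonal to κ
  have step1 : ∀ (i : Fin p) (a : Fin q) (ε : ℚ), ε * ε = 1 →
      κ.1 i - ε * κ.2 a = 0 → ω.1 i - ε * ω.2 a = 0 := by
    intro i a ε hε hκ
    have := hcon (vv i a ε) (Bodd_vv_self i a ε hε) (by rwa [Bodd_vv_left])
    rwa [Bodd_vv_left] at this
  -- Step 2 : two–vector isotropic combinations orthogonal to κ
  have step2 : ∀ (i j : Fin p) (a b : Fin q) (ε δ : ℚ), i ≠ j → a ≠ b →
      ε * ε = 1 → δ * δ = 1 →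
      (κ.1 j - δ * κ.2 b) * (ω.1 i - ε * ω.2 a)
        = (κ.1 i - ε * κ.2 a) * (ω.1 j - δ * ω.2 b) := by
    intro i j a b ε δ hij hab hε hδ
    have h1 : Bodd p q ((κ.1 j - δ * κ.2 b) • (vv i a ε) - (κ.1 i - ε * κ.2 a) • (vv j b δ))
        ((κ.1 j - δ * κ.2 b) • (vv i a ε) - (κ.1 i - ε * κ.2 a) • (vv j b δ)) = 0 := by
      simp only [Bodd_sub_left, Bodd_sub_right, Bodd_smul_left, Bodd_smul_right,
        Bodd_vv_self i a ε hε, Bodd_vv_self j b δ hδ, Bodd_vv_ne i j a b ε δ hij hab,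
        Bodd_vv_ne j i b a δ ε (Ne.symm hij) (Ne.symm hab)]
      ring
    have h2 : Bodd p q ((κ.1 j - δ * κ.2 b) • (vv i a ε) - (κ.1 i - ε * κ.2 a) • (vv j b δ))
        κ = 0 := by
      simp only [Bodd_sub_left, Bodd_smul_left, Bodd_vv_left]
      ring
    have h3 := hcon _ h1 h2
    simp only [Bodd_sub_left, Bodd_smul_left, Bodd_vv_left] at h3
    linear_combination h3
  -- Step 3 : pairwise vanishing of the 2×2 determinants
  have key : ∀ (i j : Fin p) (a b : Fin q), i ≠ j → a ≠ b →
      κ.1 i * ω.1 j = ω.1 i * κ.1 j ∧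
      κ.1 i * ω.2 b = ω.1 i * κ.2 b ∧
      κ.2 a * ω.1 j = ω.2 a * κ.1 j ∧
      κ.2 a * ω.2 b = ω.2 a * κ.2 b := by
    intro i j a b hij hab
    have e11 := step2 i j a b 1 1 hij hab (by ring) (by ring)
    have e1m := step2 i j a b 1 (-1) hij hab (by ring) (by ring)
    have em1 := step2 i j a b (-1) 1 hij hab (by ring) (by ring)
    have emm := step2 i j a b (-1) (-1) hij hab (by ring) (by ring)
    exact ⟨by linear_combination (-e11 - e1m - em1 - emm) / 4,
      by linear_combination (e11 - e1m + em1 - emm) / 4,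
      by linear_combination (e11 + e1m - em1 - emm) / 4,
      by linear_combination (-e11 + e1m + em1 - emm) / 4⟩
  have claimPP : ∀ i j : Fin p, κ.1 i * ω.1 j = ω.1 i * κ.1 j := by
    intro i j
    rcases eq_or_ne i j with h | h
    · subst h; ring
    · obtain ⟨a, ha⟩ := exists_ne (⟨0, by omega⟩ : Fin q)
      exact (key i j a ⟨0, by omega⟩ h ha).1
  have claimPQ : ∀ (i : Fin p) (b : Fin q), κ.1 i * ω.2 b = ω.1 i * κ.2 b := by
    intro i b
    obtain ⟨j, hj⟩ := exists_ne i
    obtain ⟨a, ha⟩ := exists_ne b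
    exact (key i j a b (Ne.symm hj) ha).2.1
  have claimQP : ∀ (a : Fin q) (j : Fin p), κ.2 a * ω.1 j = ω.2 a * κ.1 j := by
    intro a j
    obtain ⟨i, hi⟩ := exists_ne j
    obtain ⟨b, hb⟩ := exists_ne a
    exact (key i j a b hi (Ne.symm hb)).2.2.1
  have claimQQ : ∀ a b : Fin q, κ.2 a * ω.2 b = ω.2 a * κ.2 b := by
    intro a b
    rcases eq_or_ne a b with h | h
    · subst h; ring
    · obtain ⟨i, hi⟩ := exists_ne (⟨0, by omega⟩ : Fin p)
      exact (key i ⟨0, by omega⟩ a b hi h).2.2.2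
  -- Final case analysis
  by_cases hκ1 : ∃ i0, κ.1 i0 ≠ 0
  · obtain ⟨i0, hi0⟩ := hκ1
    refine hω (ω.1 i0 / κ.1 i0) (Prod.ext ?_ ?_)
    · funext j
      have h := claimPP i0 j
      simp only [Prod.smul_fst, Pi.smul_apply, smul_eq_mul]
      field_simp
      linear_combination h
    · funext b
      have h := claimPQ i0 b
      simp only [Prod.smul_snd, Pi.smul_apply, smul_eq_mul]
      field_simp
      linear_combination h
  · push_neg at hκ1
    by_cases hκ2 : ∃ a0, κ.2 a0 ≠ 0
    · obtain ⟨a0, ha0⟩ := hκ2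
      refine hω (ω.2 a0 / κ.2 a0) (Prod.ext ?_ ?_)
      · funext j
        have h := claimQP a0 j
        simp only [Prod.smul_fst, Pi.smul_apply, smul_eq_mul]
        field_simp
        linear_combination h
      · funext b
        have h := claimQQ a0 b
        simp only [Prod.smul_snd, Pi.smul_apply, smul_eq_mul]
        field_simp
        linear_combination h
    · push_neg at hκ2
      have hz : ∀ (i : Fin p) (a : Fin q) (ε : ℚ), ε * ε = 1 → ω.1 i - ε * ω.2 a = 0 := by
        intro i a ε hε
        exact step1 i a ε hε (by rw [hκ1, hκ2]; ring)
      refine hω 0 ?_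
      rw [zero_smul]
      refine Prod.ext ?_ ?_
      · funext i
        have h1 := hz i ⟨0, by omega⟩ 1 (by ring)
        have h2 := hz i ⟨0, by omega⟩ (-1) (by ring)
        show ω.1 i = 0
        linarith
      · funext a
        have h1 := hz ⟨0, by omega⟩ a 1 (by ring)
        have h2 := hz ⟨0, by omega⟩ a (-1) (by ring)
        show ω.2 a = 0
        linarith
end

section
/- Suppose N ≥ 3 and let κ, ω ∈ ℚ^N × ℚ^N × W be such that ω is not a rational multiple of κ. Then there exists t ∈ ℚ^N × ℚ^N × W with B(t, t) = 0, B(t, κ) = 0 and B(t, ω) ≠ 0. -/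
/-- The even indefinite unimodular form: `N` hyperbolic pairs plus a definite summand
`(W, B_W)`:  `B((a,b,T),(a',b',T')) = Σ (a_j b'_j + a'_j b_j) + B_W(T,T')`. -/
def Beven (N : ℕ) {W : Type*} [AddCommGroup W] [Module ℚ W]
    (BW : W →ₗ[ℚ] W →ₗ[ℚ] ℚ)
    (u v : (Fin N → ℚ) × (Fin N → ℚ) × W) : ℚ :=
  (∑ j : Fin N, (u.1 j * v.2.1 j + v.1 j * u.2.1 j)) + BW u.2.2 v.2.2

/-!
Write `V = ℚ^N × ℚ^N × W`. Arguing by contradiction, `B(·, ω)` vanishes on every isotropic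
vector of `κ^⊥`. The totally isotropic subspace `ℚ^N × 0 × 0` has dimension `N ≥ 3`, so it
meets `κ^⊥` in a subspace of dimension `≥ 2`, which contains an isotropic `e` outside `ℚκ`.
As `B` is nondegenerate, `B(e, y) ≠ 0` for some `y ∈ κ^⊥`. For `x ∈ κ^⊥` with `B(e, x) ≠ 0`,
`x + s e` is isotropic for a suitable `s`, so `B(x, ω) = 0`; the remaining `x` are differences
of two such. Thus `B(·, ω)` vanishes on `κ^⊥`, and nondegeneracy puts `ω` in `ℚκ`.
-/

open Module LinearMap

section BilinForm

variable {K V : Type*} [Field K] [AddCommGroup V] [Module K V]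

theorem LinearMap.SeparatingRight.mem_span_singleton_of_forall_apply_eq_zero
    {B : LinearMap.BilinForm K V} (hB : B.SeparatingRight) {κ ω : V}
    (h : ∀ t, B t κ = 0 → B t ω = 0) : ω ∈ K ∙ κ := by
  have hker : ⨅ _ : Unit, ker (B.flip κ) ≤ ker (B.flip ω) := by
    rw [iInf_const]
    exact h
  obtain ⟨c, hc⟩ := Submodule.mem_span_singleton.1
    (by simpa only [Set.range_const] using mem_span_of_iInf_ker_le_ker hker)
  refine Submodule.mem_span_singleton.2 ⟨c, (sub_eq_zero.1 (hB _ fun t => ?_)).symm⟩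
  have : c * B t κ = B t ω := LinearMap.congr_fun hc t
  rw [map_sub, map_smul, smul_eq_mul, this, sub_self]

variable [NeZero (2 : K)] {B : LinearMap.BilinForm K V} {φ ℓ : V →ₗ[K] K}

theorem apply_self_add_smul_eq_zero (hB : B.IsSymm) {e x : V} (he : B e e = 0) (hex : B e x ≠ 0) :
    B (x + (-B x x / (2 * B e x)) • e) (x + (-B x x / (2 * B e x)) • e) = 0 := by
  simp only [map_add, map_smul, LinearMap.add_apply, LinearMap.smul_apply, smul_eq_mul, he,
    hB.eq x e]
  field_simp
  ring

theorem apply_eq_zero_of_forall_isotropic_of_apply_ne_zero (hB : B.IsSymm)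
    (hℓ : ∀ t, B t t = 0 → φ t = 0 → ℓ t = 0) {e x : V} (he : B e e = 0) (heφ : φ e = 0)
    (hex : B e x ≠ 0) (hxφ : φ x = 0) : ℓ x = 0 := by
  set s := -B x x / (2 * B e x)
  have hshift : ℓ (x + s • e) = 0 :=
    hℓ _ (apply_self_add_smul_eq_zero hB he hex) (by simp [hxφ, heφ])
  have hself : ℓ e = 0 := hℓ e he heφ
  simpa [hself] using hshift

theorem apply_eq_zero_of_forall_isotropic (hB : B.IsSymm)
    (hℓ : ∀ t, B t t = 0 → φ t = 0 → ℓ t = 0) {e y : V} (he : B e e = 0) (heφ : φ e = 0)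
    (hyφ : φ y = 0) (hey : B e y ≠ 0) {x : V} (hxφ : φ x = 0) : ℓ x = 0 := by
  by_cases hex : B e x = 0
  · have hexy : B e (x + y) ≠ 0 := by rwa [map_add, hex, zero_add]
    have hxy : ℓ (x + y) = 0 :=
      apply_eq_zero_of_forall_isotropic_of_apply_ne_zero hB hℓ he heφ hexy (by simp [hxφ, hyφ])
    have hy : ℓ y = 0 := apply_eq_zero_of_forall_isotropic_of_apply_ne_zero hB hℓ he heφ hey hyφ
    rwa [map_add, hy, add_zero] at hxy
  · exact apply_eq_zero_of_forall_isotropic_of_apply_ne_zero hB hℓ he heφ hex hxφ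

end BilinForm

theorem exists_apply_eq_zero_notMem_span_singleton {K E V : Type*} [Field K] [AddCommGroup E]
    [Module K E] [FiniteDimensional K E] [AddCommGroup V] [Module K V]
    (hE : 3 ≤ finrank K E) (φ : E →ₗ[K] K) {ι : E →ₗ[K] V} (hι : Function.Injective ι) (v : V) :
    ∃ a, φ a = 0 ∧ ι a ∉ K ∙ v := by
  by_contra! h
  have hker : 2 ≤ finrank K (ker φ) := by
    have := φ.finrank_range_add_finrank_ker
    have : finrank K (range φ) ≤ 1 := (Submodule.finrank_le _).trans (finrank_self K).le
    omega
  let f : ker φ →ₗ[K] K ∙ v := (ι ∘ₗ (ker φ).subtype).codRestrict _ fun a => h a a.2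
  have hf : Function.Injective f := fun a b hab =>
    Subtype.ext (hι (congrArg Subtype.val hab :))
  have hspan : finrank K (K ∙ v) ≤ 1 := (finrank_span_le_card {v}).trans (by simp)
  have := finrank_le_finrank_of_injective hf
  omega

section Beven

variable {W : Type*} [AddCommGroup W] [Module ℚ W]

def bevenForm (N : ℕ) (BW : W →ₗ[ℚ] W →ₗ[ℚ] ℚ) :
    LinearMap.BilinForm ℚ ((Fin N → ℚ) × (Fin N → ℚ) × W) :=
  LinearMap.mk₂ ℚ (Beven N BW)
    (fun _ _ _ => by
      simp only [Beven, Prod.fst_add, Prod.snd_add, Pi.add_apply, map_add, LinearMap.add_apply,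
        add_mul, mul_add, Finset.sum_add_distrib]
      ring)
    (fun _ _ _ => by
      simp only [Beven, Prod.smul_fst, Prod.smul_snd, Pi.smul_apply, smul_eq_mul, map_smul,
        LinearMap.smul_apply, mul_add, Finset.mul_sum, mul_assoc, mul_left_comm])
    (fun _ _ _ => by
      simp only [Beven, Prod.fst_add, Prod.snd_add, Pi.add_apply, map_add,
        add_mul, mul_add, Finset.sum_add_distrib]
      ring)
    (fun _ _ _ => by
      simp only [Beven, Prod.smul_fst, Prod.smul_snd, Pi.smul_apply, smul_eq_mul, map_smul,
        mul_add, Finset.mul_sum, mul_assoc, mul_left_comm])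

variable {N : ℕ} {BW : W →ₗ[ℚ] W →ₗ[ℚ] ℚ}

@[simp]
theorem bevenForm_apply (u v : (Fin N → ℚ) × (Fin N → ℚ) × W) :
    bevenForm N BW u v = Beven N BW u v := rfl

theorem bevenForm_isSymm (hsymm : ∀ x y : W, BW x y = BW y x) : (bevenForm N BW).IsSymm :=
  ⟨fun u v => by simp only [bevenForm_apply, Beven, hsymm u.2.2]; congr 1; simp only [add_comm]⟩

theorem bevenForm_separatingRight (hBW : ∀ T, BW T T = 0 → T = 0) :
    (bevenForm N BW).SeparatingRight := by
  intro v hv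
  have ha : v.1 = 0 := funext fun k => by
    simpa [Beven, Pi.single_apply] using hv (0, Pi.single k 1, 0)
  have hb : v.2.1 = 0 := funext fun k => by
    simpa [Beven, Pi.single_apply] using hv (Pi.single k 1, 0, 0)
  have hT : v.2.2 = 0 := hBW _ (by simpa [Beven, ha, hb] using hv (0, 0, v.2.2))
  exact Prod.ext ha (Prod.ext hb hT)

end Beven

theorem exists_isotropic_class_even_general (N : ℕ) (hN : 3 ≤ N)
    {W : Type*} [AddCommGroup W] [Module ℚ W]
    (BW : W →ₗ[ℚ] W →ₗ[ℚ] ℚ)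
    (hsymm : ∀ x y : W, BW x y = BW y x)
    (hdef : (∀ T : W, T ≠ 0 → 0 < BW T T) ∨ (∀ T : W, T ≠ 0 → BW T T < 0))
    (κ ω : (Fin N → ℚ) × (Fin N → ℚ) × W) (hω : ∀ c : ℚ, ω ≠ c • κ) :
    ∃ t : (Fin N → ℚ) × (Fin N → ℚ) × W,
      Beven N BW t t = 0 ∧ Beven N BW t κ = 0 ∧ Beven N BW t ω ≠ 0 := by
  have hBW : ∀ T, BW T T = 0 → T = 0 := fun T hT => by
    by_contra hT0
    rcases hdef with h | h
    · exact (h T hT0).ne' hT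
    · exact (h T hT0).ne hT
  set B := bevenForm N BW
  have hsep : B.SeparatingRight := bevenForm_separatingRight hBW
  have hB : B.IsSymm := bevenForm_isSymm hsymm
  by_contra! hcon
  obtain ⟨a, haκ, ha⟩ := exists_apply_eq_zero_notMem_span_singleton
    (by rwa [finrank_fin_fun]) (B.flip κ ∘ₗ LinearMap.inl ℚ _ _) LinearMap.inl_injective κ
  set e := LinearMap.inl ℚ _ ((Fin N → ℚ) × W) a
  have he : B e e = 0 := by simp [B, e, Beven]
  obtain ⟨y, hyκ, hey⟩ : ∃ y, B y κ = 0 ∧ B e y ≠ 0 := by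
    by_contra! h
    exact ha (hsep.mem_span_singleton_of_forall_apply_eq_zero fun y hy => by
      rw [← hB.eq]; exact h y hy)
  obtain ⟨c, hc⟩ := Submodule.mem_span_singleton.1
    (hsep.mem_span_singleton_of_forall_apply_eq_zero fun x hx =>
      apply_eq_zero_of_forall_isotropic (φ := B.flip κ) (ℓ := B.flip ω) hB hcon
        he haκ hyκ hey hx)
  exact hω c hc.symm

/-- Section 3d, spin case.  If `N ≥ 3`, `B_W` is symmetric and
definite, and `ω` is not a rational multiple of `κ`, then there is `t` with
`B(t,t) = 0`, `B(t,κ) = 0` and `B(t,ω) ≠ 0`. -/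
theorem exists_isotropic_class_even (N : ℕ) (hN : 3 ≤ N)
    {W : Type*} [AddCommGroup W] [Module ℚ W] [FiniteDimensional ℚ W]
    (BW : W →ₗ[ℚ] W →ₗ[ℚ] ℚ)
    (hsymm : ∀ x y : W, BW x y = BW y x)
    (hdef : (∀ T : W, T ≠ 0 → 0 < BW T T) ∨ (∀ T : W, T ≠ 0 → BW T T < 0))
    (κ ω : (Fin N → ℚ) × (Fin N → ℚ) × W) (hω : ∀ c : ℚ, ω ≠ c • κ) :
    ∃ t : (Fin N → ℚ) × (Fin N → ℚ) × W,
      Beven N BW t t = 0 ∧ Beven N BW t κ = 0 ∧ Beven N BW t ω ≠ 0 :=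
  exists_isotropic_class_even_general N hN BW hsymm hdef κ ω hω
end
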